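/- arXiv:cs/0206002 — 5 statements merged into one kernel-verified Lean document; each statement's English description precedes it below -/
import Mathlib

section
/- Let p, q, r be points in the plane with q = 0, and let t be a linear (affine) function on the plane with t(q) = 0. Write the gradient ∇t = μv̄ + νn̄ where v̄ = r/‖r‖ and n̄ is the unit vector orthogonal to v̄ with n̄·p > 0. Then μ = t(r)/‖r‖, and if ‖∇t‖ ≤ 1 then t(p) ≤ (t(r)/‖r‖²)(p·r) + (√(‖r‖² − t(r)²)/‖r‖²)|p×r|, where p×r = p₁r₂ − p₂r₁. -/
open scoped RealInnerProductSpace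

/-- with q = 0 and t linear (t x = ⟪g, x⟫, so t(q) = 0), writing the
gradient g = μ • v̄ + ν • n̄ with v̄ = r/‖r‖ and n̄ the unit vector orthogonal to v̄
with ⟪n̄, p⟫ > 0, we have μ = t(r)/‖r‖, and if ‖g‖ ≤ 1 then
t(p) ≤ (t(r)/‖r‖²)(p·r) + (√(‖r‖² − t(r)²)/‖r‖²)|p×r|. -/
theorem stmt_0 (p q r g v n : EuclideanSpace ℝ (Fin 2)) (μ ν : ℝ)
    (hq : q = 0)
    (hind : AffineIndependent ℝ ![p, q, r])
    (hv : v = ‖r‖⁻¹ • r)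
    (hn : ‖n‖ = 1)
    (hvn : ⟪v, n⟫ = 0)
    (hnp : 0 < ⟪n, p⟫)
    (hg : g = μ • v + ν • n)
    (htr : |⟪g, r⟫| ≤ ‖r‖) :
    μ = ⟪g, r⟫ / ‖r‖ ∧
      (‖g‖ ≤ 1 →
        ⟪g, p⟫ ≤ (⟪g, r⟫ / ‖r‖ ^ 2) * ⟪p, r⟫ +
          (Real.sqrt (‖r‖ ^ 2 - ⟪g, r⟫ ^ 2) / ‖r‖ ^ 2) * |p 0 * r 1 - p 1 * r 0|) := by
  -- coordinate notation
  have hip : ∀ x y : EuclideanSpace ℝ (Fin 2), ⟪x, y⟫ = x 0 * y 0 + x 1 * y 1 := by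
    intro x y
    simp [PiLp.inner_apply, Fin.sum_univ_two, RCLike.inner_apply, mul_comm]
  -- r ≠ 0
  have hqr : q ≠ r := by
    have := hind.injective.ne (show (1 : Fin 3) ≠ 2 by decide)
    simpa using this
  have hr0 : r ≠ 0 := fun h => hqr (by rw [hq, h])
  have hR : (0 : ℝ) < ‖r‖ := norm_pos_iff.mpr hr0
  have hRsq : ‖r‖ ^ 2 = r 0 ^ 2 + r 1 ^ 2 := by
    rw [← real_inner_self_eq_norm_sq, hip]; ring
  have hnsq : n 0 ^ 2 + n 1 ^ 2 = 1 := by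
    have := hn
    have h := real_inner_self_eq_norm_sq n
    rw [hip, hn] at h
    nlinarith [h]
  -- coordinates of v and g
  have hv0 : v 0 = ‖r‖⁻¹ * r 0 := by rw [hv]; rfl
  have hv1 : v 1 = ‖r‖⁻¹ * r 1 := by rw [hv]; rfl
  have hg0 : g 0 = μ * v 0 + ν * n 0 := by rw [hg]; rfl
  have hg1 : g 1 = μ * v 1 + ν * n 1 := by rw [hg]; rfl
  -- orthogonality in coordinates
  have hvn' : r 0 * n 0 + r 1 * n 1 = 0 := by
    have h := hvn
    rw [hip, hv0, hv1] at h
    have hRne : ‖r‖ ≠ 0 := ne_of_gt hR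
    field_simp at h
    linarith
  -- ⟪g, r⟫ = μ * ‖r‖
  have hgr : ⟪g, r⟫ = μ * ‖r‖ := by
    rw [hip, hg0, hg1, hv0, hv1]
    have hRne : ‖r‖ ≠ 0 := ne_of_gt hR
    field_simp
    linear_combination (-μ) * hRsq + (ν * ‖r‖) * hvn'
  have hμ : μ = ⟪g, r⟫ / ‖r‖ := by
    rw [hgr]; field_simp
  refine ⟨hμ, fun hg1' => ?_⟩
  -- norm of g squared
  have hgsq : μ ^ 2 + ν ^ 2 = ‖g‖ ^ 2 := by
    rw [← real_inner_self_eq_norm_sq, hip, hg0, hg1, hv0, hv1]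
    have hRne : ‖r‖ ≠ 0 := ne_of_gt hR
    field_simp
    linear_combination μ^2 * hRsq - 2*μ*ν*‖r‖ * hvn' - ν^2*‖r‖^2 * hnsq
  have hμν : μ ^ 2 + ν ^ 2 ≤ 1 := by
    rw [hgsq]
    nlinarith [norm_nonneg g]
  -- the positive inner product with n
  have hnp' : 0 < n 0 * p 0 + n 1 * p 1 := by
    have := hnp; rw [hip] at this; linarith
  set np := n 0 * p 0 + n 1 * p 1 with hnpdef
  -- cross product identity
  have hcross : |p 0 * r 1 - p 1 * r 0| = ‖r‖ * np := by
    have hsq : (p 0 * r 1 - p 1 * r 0) ^ 2 = (‖r‖ * np) ^ 2 := by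
      linear_combination (-(n 0 * p 0 + n 1 * p 1)^2) * hRsq +
        ((p 0^2 - p 1^2)*(n 1 * r 1 - n 0 * r 0) - 2*(p 0)*(p 1)*(r 0 * n 1 + r 1 * n 0)) * hvn' +
        (-(p 0 * r 1 - p 1 * r 0)^2) * hnsq
    have h1 : |p 0 * r 1 - p 1 * r 0| = Real.sqrt ((p 0 * r 1 - p 1 * r 0) ^ 2) :=
      (Real.sqrt_sq_eq_abs _).symm
    rw [h1, hsq, Real.sqrt_sq (by positivity)]
  -- key bound on ν
  have h1 : (0:ℝ) ≤ 1 - μ ^ 2 := by linarith [hμν, sq_nonneg ν]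
  have hX : (0 : ℝ) ≤ ‖r‖ ^ 2 - (μ * ‖r‖) ^ 2 := by
    have h2 : ‖r‖ ^ 2 * (1 - μ ^ 2) = ‖r‖ ^ 2 - (μ * ‖r‖) ^ 2 := by ring
    linarith [mul_nonneg (sq_nonneg ‖r‖) h1]
  have key : ν * ‖r‖ ≤ Real.sqrt (‖r‖ ^ 2 - (μ * ‖r‖) ^ 2) := by
    rcases le_or_gt ν 0 with hν | hν
    · have : ν * ‖r‖ ≤ 0 := mul_nonpos_of_nonpos_of_nonneg hν hR.le
      exact this.trans (Real.sqrt_nonneg _)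
    · rw [show ν * ‖r‖ = Real.sqrt ((ν * ‖r‖) ^ 2) by
        rw [Real.sqrt_sq (by positivity)]]
      apply Real.sqrt_le_sqrt
      have h3 : ν ^ 2 ≤ 1 - μ ^ 2 := by linarith [hμν]
      calc (ν * ‖r‖) ^ 2 = ‖r‖ ^ 2 * ν ^ 2 := by ring
        _ ≤ ‖r‖ ^ 2 * (1 - μ ^ 2) := mul_le_mul_of_nonneg_left h3 (sq_nonneg ‖r‖)
        _ = ‖r‖ ^ 2 - (μ * ‖r‖) ^ 2 := by ring
  -- assemble
  rw [hgr, hcross, hip, hip, hg0, hg1, hv0, hv1]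
  have hRne : ‖r‖ ≠ 0 := ne_of_gt hR
  have hmain : ν * np ≤ Real.sqrt (‖r‖ ^ 2 - (μ * ‖r‖) ^ 2) / ‖r‖ ^ 2 * (‖r‖ * np) := by
    have heq : Real.sqrt (‖r‖ ^ 2 - (μ * ‖r‖) ^ 2) / ‖r‖ ^ 2 * (‖r‖ * np)
        = Real.sqrt (‖r‖ ^ 2 - (μ * ‖r‖) ^ 2) * np / ‖r‖ := by
      field_simp
    rw [heq, le_div_iff₀ hR]
    calc ν * np * ‖r‖ = (ν * ‖r‖) * np := by ring
      _ ≤ Real.sqrt (‖r‖ ^ 2 - (μ * ‖r‖) ^ 2) * np :=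
          mul_le_mul_of_nonneg_right key hnp'.le
  have hfirst : (μ * ‖r‖ / ‖r‖ ^ 2) * (p 0 * r 0 + p 1 * r 1)
      = μ * (‖r‖⁻¹ * r 0) * p 0 + μ * (‖r‖⁻¹ * r 1) * p 1 := by
    field_simp
  calc (μ * (‖r‖⁻¹ * r 0) + ν * n 0) * p 0 + (μ * (‖r‖⁻¹ * r 1) + ν * n 1) * p 1
      = (μ * (‖r‖⁻¹ * r 0) * p 0 + μ * (‖r‖⁻¹ * r 1) * p 1) + ν * np := by
        rw [hnpdef]; ring
    _ ≤ (μ * (‖r‖⁻¹ * r 0) * p 0 + μ * (‖r‖⁻¹ * r 1) * p 1)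
        + Real.sqrt (‖r‖ ^ 2 - (μ * ‖r‖) ^ 2) / ‖r‖ ^ 2 * (‖r‖ * np) := by
        linarith [hmain]
    _ = (μ * ‖r‖ / ‖r‖ ^ 2) * (p 0 * r 0 + p 1 * r 1)
        + Real.sqrt (‖r‖ ^ 2 - (μ * ‖r‖) ^ 2) / ‖r‖ ^ 2 * (‖r‖ * np) := by
        rw [hfirst]
end

section
/- Let p, q, r ∈ ℝ² be affinely independent and let t be an affine function on ℝ². If ‖∇t‖ ≤ 1, then t(p) ≤ t(q) + ((t(r) − t(q))/‖r − q‖²)·((p − q)·(r − q)) + (√(‖r − q‖² − (t(r) − t(q))²)/‖r − q‖)·w_p, where w_p = 2·area(△pqr)/‖r − q‖ is the distance from p to the line through q and r. -/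
open scoped RealInnerProductSpace

/-- for affinely independent p, q, r ∈ ℝ² and an affine function
t x = ⟪g, x⟫ + c with ‖∇t‖ = ‖g‖ ≤ 1,
t(p) ≤ t(q) + ((t(r) − t(q))/‖r − q‖²)·((p − q)·(r − q))
          + (√(‖r − q‖² − (t(r) − t(q))²)/‖r − q‖)·w_p,
where w_p = 2·area(△pqr)/‖r − q‖ is the distance from p to the line qr. -/
theorem stmt_1 (p q r g : EuclideanSpace ℝ (Fin 2)) (c : ℝ)
    (hind : AffineIndependent ℝ ![p, q, r])
    (hg : ‖g‖ ≤ 1) :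
    (⟪g, p⟫ + c) ≤ (⟪g, q⟫ + c) +
      (((⟪g, r⟫ + c) - (⟪g, q⟫ + c)) / ‖r - q‖ ^ 2) * ⟪p - q, r - q⟫ +
      (Real.sqrt (‖r - q‖ ^ 2 - ((⟪g, r⟫ + c) - (⟪g, q⟫ + c)) ^ 2) / ‖r - q‖) *
        (|(p - q) 0 * (r - q) 1 - (p - q) 1 * (r - q) 0| / ‖r - q‖) := by
  have hrq : r ≠ q := by
    intro h
    exact (by decide : (2 : Fin 3) ≠ 1) (hind.injective (by simp [h]))
  have hn : (0:ℝ) < ‖r - q‖ := by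
    rw [norm_pos_iff, sub_ne_zero]; exact hrq
  have hin : ∀ x y : EuclideanSpace ℝ (Fin 2), ⟪x,y⟫ = x 0 * y 0 + x 1 * y 1 := by
    intro x y
    simp [PiLp.inner_apply, Fin.sum_univ_two, mul_comm]
  have hnsq : ‖r - q‖ ^ 2 = (r-q) 0 ^ 2 + (r-q) 1 ^ 2 := by
    rw [← real_inner_self_eq_norm_sq, hin]; ring
  have hsubr : ∀ i, (r-q) i = r i - q i := fun i => rfl
  have hsubp : ∀ i, (p-q) i = p i - q i := fun i => rfl
  set u0 := (r-q) 0 with hu0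
  set u1 := (r-q) 1 with hu1
  set v0 := (p-q) 0 with hv0
  set v1 := (p-q) 1 with hv1
  set T : ℝ := ⟪g, r⟫ - ⟪g, q⟫ with hT
  have hTeq : T = g 0 * u0 + g 1 * u1 := by
    rw [hT, hin, hin, hu0, hu1, hsubr 0, hsubr 1]; ring
  have hgsq : g 0 ^ 2 + g 1 ^ 2 ≤ 1 := by
    have h1 : ⟪g, g⟫ = ‖g‖ ^ 2 := real_inner_self_eq_norm_sq g
    rw [hin] at h1
    nlinarith [norm_nonneg g]
  set s : ℝ := Real.sqrt (‖r - q‖ ^ 2 - T ^ 2) with hs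
  have hs0 : 0 ≤ s := Real.sqrt_nonneg _
  have hcross : |g 0 * u1 - g 1 * u0| ≤ s := by
    apply Real.abs_le_sqrt
    rw [hnsq, hTeq]
    nlinarith [sq_nonneg u0, sq_nonneg u1, sq_nonneg (g 0 * u1 - g 1 * u0)]
  -- key: ‖u‖² ⟪g, p-q⟫ = T ⟪p-q, r-q⟫ + (g×u)(v×u)
  have hgp : ⟪g, p⟫ - ⟪g, q⟫ = g 0 * v0 + g 1 * v1 := by
    rw [hin, hin, hv0, hv1, hsubp 0, hsubp 1]; ring
  have hvu : ⟪p - q, r - q⟫ = v0 * u0 + v1 * u1 := by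
    rw [hin]
  have hkey : ‖r - q‖ ^ 2 * (⟪g, p⟫ - ⟪g, q⟫)
      = T * ⟪p - q, r - q⟫ + (g 0 * u1 - g 1 * u0) * (v0 * u1 - v1 * u0) := by
    rw [hgp, hvu, hTeq, hnsq]; ring
  have hprod : (g 0 * u1 - g 1 * u0) * (v0 * u1 - v1 * u0) ≤ s * |v0 * u1 - v1 * u0| := by
    calc (g 0 * u1 - g 1 * u0) * (v0 * u1 - v1 * u0)
        ≤ |(g 0 * u1 - g 1 * u0) * (v0 * u1 - v1 * u0)| := le_abs_self _
      _ = |g 0 * u1 - g 1 * u0| * |v0 * u1 - v1 * u0| := abs_mul _ _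
      _ ≤ s * |v0 * u1 - v1 * u0| := by
          exact mul_le_mul_of_nonneg_right hcross (abs_nonneg _)
  have hmain : ‖r - q‖ ^ 2 * (⟪g, p⟫ - ⟪g, q⟫)
      ≤ T * ⟪p - q, r - q⟫ + s * |v0 * u1 - v1 * u0| := by
    rw [hkey]; linarith
  have hsimp : ((⟪g, r⟫ + c) - (⟪g, q⟫ + c)) = T := by rw [hT]; ring
  rw [hsimp]
  have hn2 : (0:ℝ) < ‖r - q‖ ^ 2 := by positivity
  rw [← hs]
  have hrhs : ⟪g, q⟫ + c + T / ‖r - q‖ ^ 2 * ⟪p - q, r - q⟫ +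
      s / ‖r - q‖ * (|v0 * u1 - v1 * u0| / ‖r - q‖)
      = ⟪g, q⟫ + c + (T * ⟪p - q, r - q⟫ + s * |v0 * u1 - v1 * u0|) / ‖r - q‖ ^ 2 := by
    field_simp
    ring
  rw [hrhs]
  have h2 : ⟪g, p⟫ - ⟪g, q⟫ ≤ (T * ⟪p - q, r - q⟫ + s * |v0 * u1 - v1 * u0|) / ‖r - q‖ ^ 2 := by
    rw [le_div_iff₀ hn2, mul_comm]
    exact hmain
  linarith [h2]
end

section
/- Let p, q, r ∈ ℝ² be affinely independent, with q = 0, t(q) = 0 ≤ t(r), and suppose t(r) ≤ (1 − ε)w_r for some 0 < ε ≤ 1/2, where w_r = 2·area(△pqr)/‖p − q‖. Then setting t(p) = ε·w_p, with w_p = 2·area(△pqr)/‖r − q‖, satisfies both the cone inequality t(p) ≤ (t(r)/‖r‖²)(p·r) + (√(‖r‖² − t(r)²)/‖r‖)·w_p and the progress inequality t(p) ≤ t(r) + (1 − ε)w_p. -/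
open scoped RealInnerProductSpace

set_option maxHeartbeats 1000000 in
/-- with q = 0, t(q) = 0 ≤ t(r) ≤ (1 − ε)w_r and 0 < ε ≤ 1/2,
setting t(p) = ε·w_p satisfies both the cone inequality and the progress inequality.
Here w_p = 2·area(△pqr)/‖r − q‖ = |p×r|/‖r‖ and w_r = 2·area(△pqr)/‖p − q‖ = |p×r|/‖p‖. -/
theorem stmt_2 (p q r : EuclideanSpace ℝ (Fin 2)) (tr ε : ℝ)
    (hq : q = 0)
    (hind : AffineIndependent ℝ ![p, q, r])
    (hε : 0 < ε) (hε2 : ε ≤ 1 / 2)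
    (htr0 : 0 ≤ tr)
    (htr : tr ≤ (1 - ε) * (|p 0 * r 1 - p 1 * r 0| / ‖p‖)) :
    ε * (|p 0 * r 1 - p 1 * r 0| / ‖r‖) ≤
        (tr / ‖r‖ ^ 2) * ⟪p, r⟫ +
          (Real.sqrt (‖r‖ ^ 2 - tr ^ 2) / ‖r‖) * (|p 0 * r 1 - p 1 * r 0| / ‖r‖) ∧
      ε * (|p 0 * r 1 - p 1 * r 0| / ‖r‖) ≤
        tr + (1 - ε) * (|p 0 * r 1 - p 1 * r 0| / ‖r‖) := by
  subst hq
  -- the determinant is nonzero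
  have hD : p 0 * r 1 - p 1 * r 0 ≠ 0 := by
    intro h
    rw [affineIndependent_iff_not_collinear_set] at hind
    apply hind
    rw [collinear_iff_of_mem
      (show (0 : EuclideanSpace ℝ (Fin 2)) ∈ ({p, 0, r} : Set _) by simp)]
    by_cases hp : p = 0
    · refine ⟨r, fun x hx => ?_⟩
      simp only [Set.mem_insert_iff, Set.mem_singleton_iff] at hx
      rcases hx with hx | hx | hx
      · exact ⟨0, by rw [hx, hp]; simp⟩
      · exact ⟨0, by rw [hx]; simp⟩
      · exact ⟨1, by rw [hx]; simp⟩
    · have key : ∃ t : ℝ, r = t • p := by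
        by_cases hp0 : p 0 = 0
        · have hp1 : p 1 ≠ 0 := by
            intro hp1
            exact hp (by ext i; fin_cases i <;> simp [hp0, hp1])
          have hr0 : r 0 = 0 := by
            have h' : p 1 * r 0 = 0 := by rw [hp0] at h; linarith
            exact (mul_eq_zero.mp h').resolve_left hp1
          refine ⟨r 1 / p 1, ?_⟩
          ext i
          fin_cases i
          · simp [PiLp.smul_apply, smul_eq_mul, hr0, hp0]
          · simp [PiLp.smul_apply, smul_eq_mul]
            field_simp
        · refine ⟨r 0 / p 0, ?_⟩
          ext i
          fin_cases i
          · simp [PiLp.smul_apply, smul_eq_mul]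
            field_simp
          · simp [PiLp.smul_apply, smul_eq_mul]
            field_simp
            linarith [h]
      obtain ⟨t, ht⟩ := key
      refine ⟨p, fun x hx => ?_⟩
      simp only [Set.mem_insert_iff, Set.mem_singleton_iff] at hx
      rcases hx with hx | hx | hx
      · exact ⟨1, by rw [hx]; simp⟩
      · exact ⟨0, by rw [hx]; simp⟩
      · exact ⟨t, by rw [hx, ht]; simp⟩
  set A : ℝ := |p 0 * r 1 - p 1 * r 0| with hAdef
  have hA : 0 < A := abs_pos.mpr hD
  have hp : p ≠ 0 := by
    intro h; apply hD; rw [h]; simp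
  have hr : r ≠ 0 := by
    intro h; apply hD; rw [h]; simp
  have hP : 0 < ‖p‖ := norm_pos_iff.mpr hp
  have hR : 0 < ‖r‖ := norm_pos_iff.mpr hr
  set P := ‖p‖
  set R := ‖r‖
  have hc : ⟪p, r⟫ = p 0 * r 0 + p 1 * r 1 := by
    simp [PiLp.inner_apply, Fin.sum_univ_two, RCLike.inner_apply]; ring
  have hP2 : P ^ 2 = p 0 ^ 2 + p 1 ^ 2 := by
    rw [← real_inner_self_eq_norm_sq]
    simp only [PiLp.inner_apply, Fin.sum_univ_two, RCLike.inner_apply, conj_trivial]; ring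
  have hR2 : R ^ 2 = r 0 ^ 2 + r 1 ^ 2 := by
    rw [← real_inner_self_eq_norm_sq]
    simp only [PiLp.inner_apply, Fin.sum_univ_two, RCLike.inner_apply, conj_trivial]; ring
  have hA2 : A ^ 2 = (p 0 * r 1 - p 1 * r 0) ^ 2 := sq_abs _
  set c := ⟪p, r⟫ with hcdef
  clear_value c
  clear_value A P R
  have hid : c ^ 2 + A ^ 2 = P ^ 2 * R ^ 2 := by
    rw [hc, hA2, hP2, hR2]; ring
  have hAPR : A ≤ P * R := by nlinarith [sq_nonneg c, mul_pos hP hR]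
  -- c ≥ -√(P²R² - A²)
  set s1 := Real.sqrt (P ^ 2 * R ^ 2 - A ^ 2) with hs1def
  clear_value s1
  have hs1abs : s1 = |c| := by
    rw [hs1def, show P ^ 2 * R ^ 2 - A ^ 2 = c ^ 2 by linarith, Real.sqrt_sq_eq_abs]
  have hcge : -s1 ≤ c := by rw [hs1abs]; exact neg_abs_le c
  have hs1nonneg : 0 ≤ s1 := hs1def ▸ Real.sqrt_nonneg _
  have hs1le : s1 ≤ P * R := by
    rw [hs1abs]
    nlinarith [abs_nonneg c, sq_abs c, mul_pos hP hR]
  -- B = A / P, t0 = (1-ε)·B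
  set B := A / P with hBdef
  clear_value B
  have hBP : B * P = A := by rw [hBdef, div_mul_cancel₀ _ hP.ne']
  have hB : 0 < B := hBdef ▸ div_pos hA hP
  have hBR : B ≤ R := by
    rw [hBdef, div_le_iff₀ hP]; nlinarith
  have htrB : tr ≤ (1 - ε) * B := htr
  have ht0R : (1 - ε) * B ≤ R := by
    have h1 : (1 - ε) * B ≤ 1 * B := by
      apply mul_le_mul_of_nonneg_right _ hB.le
      linarith
    linarith
  have ht0nonneg : 0 ≤ (1 - ε) * B := mul_nonneg (by linarith) hB.le
  clear hcdef hind hp hr hD hc hP2 hR2 hA2 hAdef hs1def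
  -- key squared inequality
  have hs1B2 : (s1 * B) ^ 2 = A ^ 2 * R ^ 2 - A ^ 2 * B ^ 2 := by
    have hs1sq : s1 ^ 2 = P ^ 2 * R ^ 2 - A ^ 2 := by
      rw [hs1abs, sq_abs]; linarith
    have hB2 : B ^ 2 * P ^ 2 = A ^ 2 := by
      rw [← hBP]; ring
    linear_combination B ^ 2 * hs1sq + R ^ 2 * hB2
  have hs1BAR : s1 * B ≤ A * R := by
    have h1 : s1 * B ≤ (P * R) * B := mul_le_mul_of_nonneg_right hs1le hB.le
    have h2 : (P * R) * B = A * R := by linear_combination R * hBP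
    linarith
  have hfin : 0 ≤ (ε * (1 - ε) * A * R) * (A * R - s1 * B) := by
    apply mul_nonneg
    · exact le_of_lt (mul_pos (mul_pos (mul_pos hε (by linarith)) hA) hR)
    · linarith
  have hsq : (ε * A * R + s1 * ((1 - ε) * B)) ^ 2 ≤ (R ^ 2 - ((1 - ε) * B) ^ 2) * A ^ 2 := by
    have hsub : (s1 * ((1 - ε) * B)) ^ 2 = (1 - ε) ^ 2 * (A ^ 2 * R ^ 2 - A ^ 2 * B ^ 2) := by
      linear_combination (1 - ε) ^ 2 * hs1B2
    nlinarith [hfin, hsub]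
  -- K'' : ε A R + s1 t0 ≤ √(R² - t0²) · A
  have hK2 : ε * A * R + s1 * ((1 - ε) * B) ≤ Real.sqrt (R ^ 2 - ((1 - ε) * B) ^ 2) * A := by
    have hnn : 0 ≤ R ^ 2 - ((1 - ε) * B) ^ 2 := by nlinarith
    have : Real.sqrt (R ^ 2 - ((1 - ε) * B) ^ 2) * A
        = Real.sqrt ((R ^ 2 - ((1 - ε) * B) ^ 2) * A ^ 2) := by
      rw [Real.sqrt_mul hnn, Real.sqrt_sq hA.le]
    rw [this]
    rw [Real.le_sqrt (by nlinarith) (by nlinarith)]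
    exact hsq
  -- monotonicity in tr
  have hS : Real.sqrt (R ^ 2 - ((1 - ε) * B) ^ 2) ≤ Real.sqrt (R ^ 2 - tr ^ 2) := by
    apply Real.sqrt_le_sqrt
    nlinarith
  have hK : ε * A * R ≤ tr * c + Real.sqrt (R ^ 2 - tr ^ 2) * A := by
    have h1 : -(s1 * ((1 - ε) * B)) ≤ -(s1 * tr) := by nlinarith
    have h2 : -(s1 * tr) ≤ tr * c := by nlinarith
    have h3 : Real.sqrt (R ^ 2 - ((1 - ε) * B) ^ 2) * A ≤ Real.sqrt (R ^ 2 - tr ^ 2) * A :=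
      mul_le_mul_of_nonneg_right hS hA.le
    linarith
  constructor
  · have hR2pos : (0 : ℝ) < R ^ 2 := by positivity
    calc ε * (A / R) = (ε * A * R) / R ^ 2 := by field_simp
      _ ≤ (tr * c + Real.sqrt (R ^ 2 - tr ^ 2) * A) / R ^ 2 :=
          (div_le_div_iff_of_pos_right hR2pos).mpr hK
      _ = (tr / R ^ 2) * c + (Real.sqrt (R ^ 2 - tr ^ 2) / R) * (A / R) := by
          field_simp
  · have hwp : 0 ≤ A / R := div_nonneg hA.le hR.le
    nlinarith
end

section
/- Let H ⊂ ℝ^d be a hyperplane, p ∉ H with projection p_H, p_F ∈ H with ‖p − p_F‖² = ‖p − p_H‖² + ‖p_H − p_F‖², and 0 < ε ≤ 1. Let t be affine on ℝ^d with tangential gradient ∇_H t satisfying ‖∇_H t‖ ≤ (1 − ε)‖p − p_H‖/‖p − p_F‖, and normal derivative ∂t/∂n̄ = ε + (1 − ε)‖p_H − p_F‖/‖p − p_F‖ where n̄ = (p − p_H)/‖p − p_H‖. Then ‖∇t‖ ≤ 1. -/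
open scoped RealInnerProductSpace

/-- with p ≠ p_H (p_H the orthogonal projection of p onto the
hyperplane H), p_F ∈ H so that ‖p − p_F‖² = ‖p − p_H‖² + ‖p_H − p_F‖², 0 < ε ≤ 1,
tangential gradient g_H ⊥ n̄ = (p − p_H)/‖p − p_H‖ with
‖g_H‖ ≤ (1 − ε)‖p − p_H‖/‖p − p_F‖, and normal derivative
∂t/∂n̄ = ε + (1 − ε)‖p_H − p_F‖/‖p − p_F‖, the full gradient
∇t = g_H + (∂t/∂n̄) n̄ satisfies ‖∇t‖ ≤ 1. -/
theorem stmt_8 {d : ℕ} (p pH pF gH : EuclideanSpace ℝ (Fin d)) (ε : ℝ)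
    (hne : p ≠ pH)
    (hpyth : ‖p - pF‖ ^ 2 = ‖p - pH‖ ^ 2 + ‖pH - pF‖ ^ 2)
    (horth : ⟪gH, p - pH⟫ = 0)
    (hε : 0 < ε) (hε1 : ε ≤ 1)
    (hgH : ‖gH‖ ≤ (1 - ε) * ‖p - pH‖ / ‖p - pF‖) :
    ‖gH + (ε + (1 - ε) * ‖pH - pF‖ / ‖p - pF‖) • (‖p - pH‖⁻¹ • (p - pH))‖ ≤ 1 := by
  set a := ‖p - pH‖ with ha_def
  set b := ‖pH - pF‖ with hb_def
  set c := ‖p - pF‖ with hc_def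
  have ha : 0 < a := norm_sub_pos_iff.mpr hne
  have hb : 0 ≤ b := norm_nonneg _
  have hc : 0 < c := by
    rcases (norm_nonneg (p - pF)).lt_or_eq with h | h
    · exact h
    · exfalso; nlinarith [hpyth]
  have h1e : 0 ≤ 1 - ε := by linarith
  have hbc : b ≤ c := by nlinarith
  set s : ℝ := ε + (1 - ε) * b / c with hs_def
  have hs : 0 ≤ s := by
    rw [hs_def]
    have h := div_nonneg (mul_nonneg h1e hb) hc.le
    linarith
  have hinner : ⟪gH, s • (a⁻¹ • (p - pH))⟫ = 0 := by
    rw [inner_smul_right, inner_smul_right, horth]; ring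
  have hnsq : ‖gH + s • (a⁻¹ • (p - pH))‖ ^ 2 = ‖gH‖ ^ 2 + s ^ 2 := by
    rw [norm_add_sq_real, hinner]
    have : ‖s • (a⁻¹ • (p - pH))‖ = s := by
      rw [norm_smul, norm_smul, Real.norm_eq_abs, Real.norm_eq_abs,
        abs_of_nonneg hs, abs_of_nonneg (inv_nonneg.mpr ha.le)]
      rw [← ha_def]; field_simp
    rw [this]; ring
  have hg0 : 0 ≤ ‖gH‖ := norm_nonneg _
  have hgc : ‖gH‖ * c ≤ (1 - ε) * a := (le_div_iff₀ hc).mp hgH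
  have hsc : s * c = ε * c + (1 - ε) * b := by
    rw [hs_def]; field_simp
  have hsc2 : s ^ 2 * c ^ 2 = (ε * c + (1 - ε) * b) ^ 2 := by
    rw [← hsc]; ring
  have hgc2 : ‖gH‖ ^ 2 * c ^ 2 ≤ ((1 - ε) * a) ^ 2 := by
    have := mul_le_mul hgc hgc (by positivity) (mul_nonneg h1e ha.le)
    nlinarith
  have hrem : 0 ≤ 2 * ε * c * (1 - ε) * (c - b) :=
    mul_nonneg (mul_nonneg (mul_nonneg (mul_nonneg (by norm_num : (0:ℝ) ≤ 2) hε.le)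
      hc.le) h1e) (by linarith)
  have hpy2 : (1 - ε) ^ 2 * c ^ 2 = (1 - ε) ^ 2 * a ^ 2 + (1 - ε) ^ 2 * b ^ 2 := by
    linear_combination (1 - ε) ^ 2 * hpyth
  have hmain : (‖gH‖ ^ 2 + s ^ 2) * c ^ 2 ≤ 1 * c ^ 2 := by
    nlinarith [hgc2, hsc2, hpy2, hrem]
  have key : ‖gH + s • (a⁻¹ • (p - pH))‖ ^ 2 ≤ 1 := by
    rw [hnsq]
    exact le_of_mul_le_mul_right hmain (pow_pos hc 2)
  exact (pow_le_one_iff_of_nonneg (norm_nonneg _) two_ne_zero).mp key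
end

section
/- Let p, q, r be affinely independent points in ℝ² and let t be the unique affine function with prescribed values t(p), t(q), t(r). Then ‖∇t‖² = ((t(r) − t(q))/‖r − q‖)² + ((t(p) − t(q) − ((t(r)−t(q))/‖r−q‖²)(p−q)·(r−q))/w_p)², where w_p is the distance from p to the line qr. -/
open scoped RealInnerProductSpace

/-- for affinely independent p, q, r ∈ ℝ² and an affine function
t x = ⟪g, x⟫ + c (so ∇t = g), the squared gradient decomposes as
‖∇t‖² = ((t(r) − t(q))/‖r − q‖)²
      + ((t(p) − t(q) − ((t(r) − t(q))/‖r − q‖²)(p − q)·(r − q))/w_p)²,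
where w_p = 2·area(△pqr)/‖r − q‖ is the distance from p to line qr. -/
theorem stmt_15 (p q r g : EuclideanSpace ℝ (Fin 2)) (c : ℝ)
    (hind : AffineIndependent ℝ ![p, q, r]) :
    ‖g‖ ^ 2 = (((⟪g, r⟫ + c) - (⟪g, q⟫ + c)) / ‖r - q‖) ^ 2 +
      (((⟪g, p⟫ + c) - (⟪g, q⟫ + c) -
          (((⟪g, r⟫ + c) - (⟪g, q⟫ + c)) / ‖r - q‖ ^ 2) * ⟪p - q, r - q⟫) /
        (|(p - q) 0 * (r - q) 1 - (p - q) 1 * (r - q) 0| / ‖r - q‖)) ^ 2 := by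
  obtain ⟨p0, hp0⟩ : ∃ a : ℝ, p 0 = a := ⟨_, rfl⟩
  obtain ⟨p1, hp1⟩ : ∃ a : ℝ, p 1 = a := ⟨_, rfl⟩
  obtain ⟨q0, hq0⟩ : ∃ a : ℝ, q 0 = a := ⟨_, rfl⟩
  obtain ⟨q1, hq1⟩ : ∃ a : ℝ, q 1 = a := ⟨_, rfl⟩
  obtain ⟨r0, hr0⟩ : ∃ a : ℝ, r 0 = a := ⟨_, rfl⟩
  obtain ⟨r1, hr1⟩ : ∃ a : ℝ, r 1 = a := ⟨_, rfl⟩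
  obtain ⟨g0, hg0⟩ : ∃ a : ℝ, g 0 = a := ⟨_, rfl⟩
  obtain ⟨g1, hg1⟩ : ∃ a : ℝ, g 1 = a := ⟨_, rfl⟩
  -- linear independence of p - q and r - q
  have hkey : ∀ a b : ℝ, a • (p - q) + b • (r - q) = 0 → a = 0 ∧ b = 0 := by
    intro a b hab
    have h := affineIndependent_iff.1 hind Finset.univ ![a, -(a+b), b]
      (by simp [Fin.sum_univ_three])
      (by
        simp only [Fin.sum_univ_three, Matrix.cons_val_zero, Matrix.cons_val_one,
          Matrix.head_cons, Matrix.cons_val_two, Matrix.tail_cons]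
        linear_combination (norm := module) hab)
    exact ⟨by simpa using h 0 (Finset.mem_univ _), by simpa using h 2 (Finset.mem_univ _)⟩
  -- the determinant is nonzero
  have hD : (p0 - q0) * (r1 - q1) - (p1 - q1) * (r0 - q0) ≠ 0 := by
    intro h0
    have h1 := hkey (r1 - q1) (-(p1 - q1)) (by
      ext i
      fin_cases i <;>
        simp only [Fin.mk_zero, Fin.mk_one, Fin.isValue, PiLp.add_apply, PiLp.smul_apply,
          PiLp.sub_apply, PiLp.zero_apply, smul_eq_mul, hp0, hp1, hq0, hq1, hr0, hr1]
      · show (r1 - q1) * (p0 - q0) + -(p1 - q1) * (r0 - q0) = (0 : ℝ)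
        linear_combination h0
      · show (r1 - q1) * (p1 - q1) + -(p1 - q1) * (r1 - q1) = (0 : ℝ)
        ring)
    have h2 := hkey (r0 - q0) (-(p0 - q0)) (by
      ext i
      fin_cases i <;>
        simp only [Fin.mk_zero, Fin.mk_one, Fin.isValue, PiLp.add_apply, PiLp.smul_apply,
          PiLp.sub_apply, PiLp.zero_apply, smul_eq_mul, hp0, hp1, hq0, hq1, hr0, hr1]
      · show (r0 - q0) * (p0 - q0) + -(p0 - q0) * (r0 - q0) = (0 : ℝ)
        ring
      · show (r0 - q0) * (p1 - q1) + -(p0 - q0) * (r1 - q1) = (0 : ℝ)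
        linear_combination -h0)
    have h3 := hkey 0 1 (by
      have hrq : r - q = 0 := by
        ext i
        fin_cases i <;>
          simp only [Fin.mk_zero, Fin.mk_one, Fin.isValue, PiLp.sub_apply, PiLp.zero_apply,
            hp0, hp1, hq0, hq1, hr0, hr1]
        · show r0 - q0 = (0 : ℝ)
          linarith [h2.1]
        · show r1 - q1 = (0 : ℝ)
          linarith [h1.1]
      simp [hrq])
    exact one_ne_zero h3.2
  -- coordinate expressions
  have e1 : (p - q) 0 = p0 - q0 := by simp [PiLp.sub_apply, hp0, hq0]
  have e2 : (p - q) 1 = p1 - q1 := by simp [PiLp.sub_apply, hp1, hq1]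
  have e3 : (r - q) 0 = r0 - q0 := by simp [PiLp.sub_apply, hr0, hq0]
  have e4 : (r - q) 1 = r1 - q1 := by simp [PiLp.sub_apply, hr1, hq1]
  have hir : ⟪g, r⟫ = g0 * r0 + g1 * r1 := by
    simp [PiLp.inner_apply, RCLike.inner_apply, Fin.sum_univ_two, hg0, hg1, hr0, hr1]
    ring
  have hiq : ⟪g, q⟫ = g0 * q0 + g1 * q1 := by
    simp [PiLp.inner_apply, RCLike.inner_apply, Fin.sum_univ_two, hg0, hg1, hq0, hq1]
    ring
  have hip : ⟪g, p⟫ = g0 * p0 + g1 * p1 := by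
    simp [PiLp.inner_apply, RCLike.inner_apply, Fin.sum_univ_two, hg0, hg1, hp0, hp1]
    ring
  have hipr : ⟪p - q, r - q⟫ = (p0 - q0) * (r0 - q0) + (p1 - q1) * (r1 - q1) := by
    simp [PiLp.inner_apply, RCLike.inner_apply, Fin.sum_univ_two, e1, e2, e3, e4, hp0, hp1, hq0, hq1, hr0, hr1]
    ring
  have hgn : ‖g‖ ^ 2 = g0 ^ 2 + g1 ^ 2 := by
    rw [← real_inner_self_eq_norm_sq]
    simp only [PiLp.inner_apply, RCLike.inner_apply, Fin.sum_univ_two, hg0, hg1, conj_trivial]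
    ring
  have hNn : ‖r - q‖ ^ 2 = (r0 - q0) ^ 2 + (r1 - q1) ^ 2 := by
    rw [← real_inner_self_eq_norm_sq]
    simp only [PiLp.inner_apply, RCLike.inner_apply, Fin.sum_univ_two, e3, e4, hr0, hr1, hq0, hq1, conj_trivial]
    ring
  have hS : (r0 - q0) ^ 2 + (r1 - q1) ^ 2 ≠ 0 := by
    intro hS0
    have n0 := sq_nonneg (r0 - q0)
    have n1 := sq_nonneg (r1 - q1)
    have h5 : r0 - q0 = 0 := by
      have h7 : (r0 - q0) ^ 2 = 0 := by linarith
      exact pow_eq_zero_iff two_ne_zero |>.1 h7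
    have h6 : r1 - q1 = 0 := by
      have h7 : (r1 - q1) ^ 2 = 0 := by linarith
      exact pow_eq_zero_iff two_ne_zero |>.1 h7
    apply hD
    rw [h5, h6]; ring
  have hN : ‖r - q‖ ≠ 0 := by
    intro h
    apply hS
    rw [← hNn, h]; ring
  rw [hir, hiq, hip, hipr, e1, e2, e3, e4, hgn]
  rw [div_pow, div_pow, div_pow, sq_abs, hNn]
  have hD' : (r1 - q1) * (p0 - q0) - (r0 - q0) * (p1 - q1) ≠ 0 := fun h => hD (by linarith)
  field_simp
  ring
end
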